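/- arXiv:1811.12253 — 3 statements merged into one kernel-verified Lean document; each statement's English description precedes it below -/
import Mathlib

section
/- For every round t, the weight ratio satisfies (∑_{i} w_{t+1}(i)) / (∑_{i} w_t(i)) ≤ 1 + ((γ/K)/(1−γ))·∑_{i} p_t(i)·x_t(i) + ((e−2)·(γ/K)²/(1−γ))·∑_{i} p_t(i)·(x_t(i))², where e = exp(1). -/
/-!
Each weight is multiplied by `exp aᵢ` with `0 ≤ aᵢ ≤ 1`, and on `[0, 1]` the exponential series
gives `exp a ≤ 1 + a + (e - 2) a²` because `aⁿ⁺² ≤ a²` and `∑ 1/(n+2)! = e - 2`. Averaging this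
against the normalized weights `wᵢ / W`, whose total mass is at most `1`, and bounding each
`wᵢ / W` by `pᵢ / (1 - γ)` (the exploration term `γ / K` of `pᵢ` is nonnegative) gives the ratio bound.
-/

open Finset Real

theorem hasSum_exp_tail (z : ℝ) :
    HasSum (fun n : ℕ => z ^ (n + 2) / (n + 2).factorial) (exp z - 1 - z) := by
  have h := (hasSum_nat_add_iff' 2).mpr (exp_eq_exp_ℝ ▸ NormedSpace.expSeries_div_hasSum_exp z)
  simpa [sum_range_succ, sub_sub] using h

theorem exp_le_one_add_add_exp_one_sub_two_mul_sq {z : ℝ} (h0 : 0 ≤ z) (h1 : z ≤ 1) :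
    exp z ≤ 1 + z + (exp 1 - 2) * z ^ 2 := by
  have htail := hasSum_le (fun n => ?_) (hasSum_exp_tail z) ((hasSum_exp_tail 1).mul_left (z ^ 2))
  · linarith
  · rw [one_pow, mul_one_div, pow_add]
    gcongr
    exact mul_le_of_le_one_left (sq_nonneg z) (pow_le_one₀ h0 h1)

section

variable {ι : Type*} [Fintype ι]

theorem sum_mul_exp_div_sum_le (w a q : ι → ℝ) (hw : ∀ i, 0 ≤ w i)
    (ha0 : ∀ i, 0 ≤ a i) (ha1 : ∀ i, a i ≤ 1) (hq : ∀ i, w i / ∑ j, w j ≤ q i) :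
    (∑ i, w i * exp (a i)) / ∑ i, w i ≤
      1 + ∑ i, q i * a i + (exp 1 - 2) * ∑ i, q i * a i ^ 2 := by
  set W := ∑ j, w j
  have he : 0 ≤ exp 1 - 2 := by linarith [add_one_le_exp (1 : ℝ)]
  have hmass : ∑ i, w i / W ≤ 1 := by rw [← sum_div]; exact div_self_le_one W
  calc (∑ i, w i * exp (a i)) / W
      ≤ ∑ i, w i / W * (1 + a i + (exp 1 - 2) * a i ^ 2) := by
        rw [sum_div]
        gcongr with i
        rw [mul_div_right_comm]
        exact mul_le_mul_of_nonneg_left (exp_le_one_add_add_exp_one_sub_two_mul_sq (ha0 i) (ha1 i))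
          (div_nonneg (hw i) (sum_nonneg fun j _ => hw j))
    _ = ∑ i, w i / W + ∑ i, w i / W * a i + (exp 1 - 2) * ∑ i, w i / W * a i ^ 2 := by
        simp only [mul_add, sum_add_distrib, mul_one, mul_sum, mul_left_comm (exp 1 - 2)]
    _ ≤ 1 + ∑ i, q i * a i + (exp 1 - 2) * ∑ i, q i * a i ^ 2 := by
        gcongr with i _ i
        · exact ha0 i
        · exact hq i
        · exact hq i

end

open Finset in
theorem exp3_bwk_weight_ratio_general
    (K : ℕ) (γ : ℝ) (hγ0 : 0 < γ) (hγ1 : γ < 1)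
    (x : ℕ → Fin K → ℝ)
    (hx0 : ∀ t i, 0 ≤ x t i)
    (hx1 : ∀ t i, (γ / K) * x t i ≤ 1)
    (w : ℕ → Fin K → ℝ)
    (hw0 : ∀ i, w 0 i = 1)
    (hwrec : ∀ t i, w (t + 1) i = w t i * Real.exp ((γ / K) * x t i))
    (p : ℕ → Fin K → ℝ)
    (hp : ∀ t i, p t i = (1 - γ) * w t i / (∑ j, w t j) + γ / K)
    (t : ℕ) :
    (∑ i, w (t + 1) i) / (∑ i, w t i) ≤
      1 + ((γ / K) / (1 - γ)) * ∑ i, p t i * x t i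
        + ((Real.exp 1 - 2) * (γ / K) ^ 2 / (1 - γ)) * ∑ i, p t i * (x t i) ^ 2 := by
  have hγK : 0 ≤ γ / K := by positivity
  have h1γ : 0 < 1 - γ := sub_pos.mpr hγ1
  have hw : ∀ s i, 0 ≤ w s i := by
    intro s
    induction s with
    | zero => simp [hw0]
    | succ s ih => intro i; rw [hwrec]; exact mul_nonneg (ih i) (exp_pos _).le
  have hq : ∀ i, w t i / ∑ j, w t j ≤ p t i / (1 - γ) := fun i => by
    rw [le_div_iff₀ h1γ, hp, mul_comm, ← mul_div_assoc]
    exact le_add_of_nonneg_right hγK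
  simp only [hwrec]
  refine (sum_mul_exp_div_sum_le (w t) _ _ (hw t) (fun i => mul_nonneg hγK (hx0 t i))
    (hx1 t) hq).trans_eq ?_
  rw [mul_sum, mul_sum, mul_sum]
  congr 1
  · congr 1
    exact sum_congr rfl fun i _ => by ring
  · exact sum_congr rfl fun i _ => by ring

open Finset in
theorem exp3_bwk_weight_ratio
    (K : ℕ) (hK : 1 ≤ K) (γ : ℝ) (hγ0 : 0 < γ) (hγ1 : γ < 1)
    (x : ℕ → Fin K → ℝ)
    (hx0 : ∀ t i, 0 ≤ x t i)
    (hx1 : ∀ t i, (γ / K) * x t i ≤ 1)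
    (w : ℕ → Fin K → ℝ)
    (hw0 : ∀ i, w 0 i = 1)
    (hwrec : ∀ t i, w (t + 1) i = w t i * Real.exp ((γ / K) * x t i))
    (p : ℕ → Fin K → ℝ)
    (hp : ∀ t i, p t i = (1 - γ) * w t i / (∑ j, w t j) + γ / K)
    (t : ℕ) :
    (∑ i, w (t + 1) i) / (∑ i, w t i) ≤
      1 + ((γ / K) / (1 - γ)) * ∑ i, p t i * x t i
        + ((Real.exp 1 - 2) * (γ / K) ^ 2 / (1 - γ)) * ∑ i, p t i * (x t i) ^ 2 :=
  exp3_bwk_weight_ratio_general K γ hγ0 hγ1 x hx0 hx1 w hw0 hwrec p hp t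
end

section
/- Let λ, η, μ, ρ, r̄, c̄ be real numbers with 0 ≤ η < λ, 0 ≤ μ ≤ 1, ρ ≥ λ, c̄ ≥ λ − η, μ − r̄ ≤ η, and c̄ − ρ ≤ η. Then μ/ρ − r̄/c̄ ≤ (1 + 1/λ)·η/(λ − η). -/
section

variable {K : Type*} [Field K] [LinearOrder K] [IsStrictOrderedRing K]

lemma mul_le_of_nonneg_of_le_one_of_le {a x b : K} (ha₀ : 0 ≤ a) (ha₁ : a ≤ 1) (hx : x ≤ b)
    (hb : 0 ≤ b) : a * x ≤ b := by
  rcases le_total 0 x with hx₀ | hx₀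
  · exact (mul_le_of_le_one_left hx₀ ha₁).trans hx
  · exact (mul_nonpos_of_nonneg_of_nonpos ha₀ hx₀).trans hb

lemma div_sub_div_le_of_sub_le {μ ρ r c η : K} (hρ : 0 < ρ) (hc : 0 < c) (hμ₀ : 0 ≤ μ)
    (hμ₁ : μ ≤ 1) (hη : 0 ≤ η) (hr : μ - r ≤ η) (hcρ : c - ρ ≤ η) :
    μ / ρ - r / c ≤ η / (ρ * c) + η / c := by
  calc μ / ρ - r / c
      ≤ μ / ρ - (μ - η) / c := by gcongr; linarith
    _ = μ * (c - ρ) / (ρ * c) + η / c := by field_simp; ring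
    _ ≤ η / (ρ * c) + η / c := by
        gcongr; exact mul_le_of_nonneg_of_le_one_of_le hμ₀ hμ₁ hcρ hη

end

theorem ucb_ratio_comparison
    (lam eta mu rho rbar cbar : ℝ)
    (heta0 : 0 ≤ eta) (hetalam : eta < lam)
    (hmu0 : 0 ≤ mu) (hmu1 : mu ≤ 1)
    (hrho : lam ≤ rho)
    (hcbar : lam - eta ≤ cbar)
    (hrdev : mu - rbar ≤ eta)
    (hcdev : cbar - rho ≤ eta) :
    mu / rho - rbar / cbar ≤ (1 + 1 / lam) * eta / (lam - eta) := by
  have hlam : 0 < lam := heta0.trans_lt hetalam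
  have hgap : 0 < lam - eta := sub_pos.mpr hetalam
  have hrho0 : 0 < rho := hlam.trans_le hrho
  have hcbar0 : 0 < cbar := hgap.trans_le hcbar
  calc mu / rho - rbar / cbar
      ≤ eta / (rho * cbar) + eta / cbar :=
        div_sub_div_le_of_sub_le hrho0 hcbar0 hmu0 hmu1 heta0 hrdev hcdev
    _ ≤ eta / (lam * (lam - eta)) + eta / (lam - eta) := by gcongr
    _ = (1 + 1 / lam) * eta / (lam - eta) := by field_simp; ring
end

section
/- Let λ, η, μ, ρ, r̄, c̄ be real numbers with 0 ≤ η < λ, 0 ≤ μ ≤ 1, ρ ≥ λ, c̄ ≥ λ − η, r̄ − μ ≤ η, and ρ − c̄ ≤ η. Then r̄/c̄ − μ/ρ ≤ (1 + 1/λ)·η/(λ − η). -/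
/-!
Over the common denominator `c̄ ρ`, the numerator splits as
`r̄ ρ - μ c̄ = (r̄ - μ) ρ + μ (ρ - c̄) ≤ η ρ + η`, so `r̄/c̄ - μ/ρ ≤ η (1 + 1/ρ) / c̄`;
the bounds `ρ ≥ λ` and `c̄ ≥ λ - η` then give the claim.
-/

theorem div_sub_div_le_mul_one_add_inv_div {r c μ ρ η : ℝ} (hc : 0 < c) (hρ : 0 < ρ)
    (hη : 0 ≤ η) (hμ₀ : 0 ≤ μ) (hμ₁ : μ ≤ 1) (hr : r - μ ≤ η) (hcρ : ρ - c ≤ η) :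
    r / c - μ / ρ ≤ η * (1 + 1 / ρ) / c := by
  have hnum : (r - μ) * ρ + μ * (ρ - c) ≤ η * (ρ + 1) := by
    have hμc : μ * (ρ - c) ≤ η :=
      (mul_le_mul_of_nonneg_left hcρ hμ₀).trans (mul_le_of_le_one_left hη hμ₁)
    linarith [mul_le_mul_of_nonneg_right hr hρ.le]
  calc r / c - μ / ρ = ((r - μ) * ρ + μ * (ρ - c)) / (c * ρ) := by
        field_simp
        ring
    _ ≤ η * (ρ + 1) / (c * ρ) := by gcongr
    _ = η * (1 + 1 / ρ) / c := by field_simp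

theorem lcb_ratio_comparison
    (lam eta mu rho rbar cbar : ℝ)
    (heta0 : 0 ≤ eta) (hetalam : eta < lam)
    (hmu0 : 0 ≤ mu) (hmu1 : mu ≤ 1)
    (hrho : lam ≤ rho)
    (hcbar : lam - eta ≤ cbar)
    (hrdev : rbar - mu ≤ eta)
    (hcdev : rho - cbar ≤ eta) :
    rbar / cbar - mu / rho ≤ (1 + 1 / lam) * eta / (lam - eta) := by
  have hlam : 0 < lam := heta0.trans_lt hetalam
  have hgap : 0 < lam - eta := sub_pos.mpr hetalam
  calc rbar / cbar - mu / rho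
      ≤ eta * (1 + 1 / rho) / cbar :=
        div_sub_div_le_mul_one_add_inv_div (hgap.trans_le hcbar) (hlam.trans_le hrho)
          heta0 hmu0 hmu1 hrdev hcdev
    _ ≤ eta * (1 + 1 / lam) / (lam - eta) := by gcongr
    _ = (1 + 1 / lam) * eta / (lam - eta) := by rw [mul_comm eta]
end
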